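/- Inverse of a grouplike power series (coefficient form): let c be a ℂ-linear map on the shuffle algebra S with c(e) = 1 for the empty word e and c(u ⧢ v) = c(u)·c(v) for all words u, v. Then for every nonempty word w, Σ_{uv=w} (−1)^{|u|} c(rev(u))·c(v) = 0 and Σ_{uv=w} (−1)^{|v|} c(u)·c(rev(v)) = 0, where the sums range over all factorizations of w as a concatenation w = uv (u or v possibly empty), rev denotes word reversal, and |u| is the length of u. Equivalently, the noncommutative formal power series with coefficients w ↦ (−1)^{|w|} c(rev(w)) is the two-sided inverse of the one with coefficients c. -/

import Mathlib

open scoped BigOperators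

namespace MZVRH

noncomputable section

/-- A word over the two-letter alphabet: `false` stands for `x0`, `true` for `x1`. -/
abbrev Word : Type := List Bool

/-- The shuffle algebra `S`: the free ℂ-vector space on words. -/
abbrev S : Type := Word →₀ ℂ

/-- The word `w` viewed as an element of `S`. -/
def wordS (w : Word) : S := Finsupp.single w 1

/-- Shuffle product of two words, as an element of `S`. -/
def shWord : Word → Word → S
  | [], v => Finsupp.single v 1
  | u, [] => Finsupp.single u 1
  | a :: u, b :: v =>
      (shWord u (b :: v)).mapDomain (a :: ·)
        + (shWord (a :: u) v).mapDomain (b :: ·)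
  termination_by u v => u.length + v.length
  decreasing_by all_goals simp [List.length_cons]

/-- The bilinear extension of the shuffle product to `S`. -/
def sh (x y : S) : S := x.sum fun u a => y.sum fun v b => (a * b) • shWord u v

/-- The word `x0^j`. -/
def x0pow (j : ℕ) : Word := List.replicate j false

/-- The word `x1^i`. -/
def x1pow (i : ℕ) : Word := List.replicate i true

/-- A word is empty or ends in `x1`. -/
def EndsInX1 (w : Word) : Prop := w = [] ∨ w.getLast? = some true

/-- A word is empty or begins with `x0` and ends in `x1`. -/
def BeginsEndsX0X1 (w : Word) : Prop :=
  w = [] ∨ (w.head? = some false ∧ w.getLast? = some true)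

/-- Membership in the subspace `S^0` spanned by the empty word and words ending in `x1`. -/
def InS0 (x : S) : Prop := ∀ w ∈ x.support, EndsInX1 w

/-- Membership in the subspace `S^{10}` spanned by the empty word and words beginning
with `x0` and ending in `x1`. -/
def InS10 (x : S) : Prop := ∀ w ∈ x.support, BeginsEndsX0X1 w

/-- `Σ_j w_j ⧢ x0^j` for a finitely supported family `f : ℕ →₀ S`. -/
def decomp0Sum (f : ℕ →₀ S) : S := f.sum fun j w => sh w (wordS (x0pow j))

/-- `Σ_{i,j} x1^i ⧢ w_{ij} ⧢ x0^j` for a finitely supported family `f : ℕ × ℕ →₀ S`. -/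
def decomp10Sum (f : ℕ × ℕ →₀ S) : S :=
  f.sum fun p w => sh (wordS (x1pow p.1)) (sh w (wordS (x0pow p.2)))

/-- `f` is a decomposition of `u` with coefficients in `S^0`. -/
def HasDecomp0 (u : S) (f : ℕ →₀ S) : Prop := (∀ j, InS0 (f j)) ∧ u = decomp0Sum f

/-- `f` is a decomposition of `u` with coefficients in `S^{10}`. -/
def HasDecomp10 (u : S) (f : ℕ × ℕ →₀ S) : Prop :=
  (∀ p, InS10 (f p)) ∧ u = decomp10Sum f

open Classical in
/-- The regularization map `reg^0 : S → S^0`, the constant term of the decomposition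
of `u` as a polynomial in `x0` with coefficients in `S^0`. -/
def reg0 (u : S) : S := if h : ∃ f, HasDecomp0 u f then h.choose 0 else 0

open Classical in
/-- The regularization map `reg^{10} : S → S^{10}`, the constant term of the decomposition
of `u` as a polynomial in `x0, x1` with coefficients in `S^{10}`. -/
def reg10 (u : S) : S := if h : ∃ f, HasDecomp10 u f then h.choose (0, 0) else 0

/-- `τ`: reverse the word and exchange `x0` with `x1`. -/
def tau (w : Word) : Word := (w.map (fun b => !b)).reverse

/-- The composition `(k1, …, kr)` attached to a word `x0^{k1-1} x1 ⋯ x0^{kr-1} x1 ∈ S^0`. -/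
def toComp : Word → List ℕ
  | [] => []
  | false :: w =>
      match toComp w with
      | [] => []
      | k :: ks => (k + 1) :: ks
  | true :: w => 1 :: toComp w

/-- Strictly decreasing tuples of positive integers `n1 > n2 > ⋯ > nr > 0`. -/
def Tuples (r : ℕ) : Type := {f : Fin r → ℕ // StrictAnti f ∧ ∀ i, 0 < f i}

/-- The multiple polylogarithm `Li_{k1,…,kr}(z) = Σ_{n1 > ⋯ > nr > 0} z^{n1}/(n1^{k1} ⋯ nr^{kr})`,
attached to a composition `ks = (k1, …, kr)`; equal to `1` for the empty composition. -/
def LiComp (ks : List ℕ) (z : ℂ) : ℂ :=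
  ∑' n : Tuples ks.length,
    (if h : 0 < ks.length then z ^ n.1 ⟨0, h⟩ else 1) /
      ∏ i : Fin ks.length, (n.1 i : ℂ) ^ ks.get i

/-- The multiple zeta value `ζ(k1,…,kr) = Σ_{n1 > ⋯ > nr > 0} 1/(n1^{k1} ⋯ nr^{kr})`
attached to a composition; equal to `1` for the empty composition. -/
def zetaComp (ks : List ℕ) : ℂ :=
  ∑' n : Tuples ks.length, 1 / ∏ i : Fin ks.length, (n.1 i : ℂ) ^ ks.get i

/-- The ℂ-linear extension of `w ↦ Li(w; z)` to elements of `S` supported on `S^0` words. -/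
def LiS0 (x : S) (z : ℂ) : ℂ := x.sum fun w c => c * LiComp (toComp w) z

/-- The ℂ-linear extension of `w ↦ ζ(w)` to elements of `S` supported on `S^{10}` words. -/
def zetaS (x : S) : ℂ := x.sum fun w c => c * zetaComp (toComp w)

open Classical in
/-- The extended multiple polylogarithm on `S`:
`Li(u; z) = Σ_j Li(w_j; z) (log z)^j / j!` where `u = Σ_j w_j ⧢ x0^j` with `w_j ∈ S^0`. -/
def Li (u : S) (z : ℂ) : ℂ :=
  if h : ∃ f, HasDecomp0 u f then
    h.choose.sum fun j w => LiS0 w z * Complex.log z ^ j / (Nat.factorial j : ℂ)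
  else 0

/-- The domain `D0 = ℂ ∖ {x ∈ ℝ : x ≥ 1}`. -/
def D0 : Set ℂ := {z | ¬ (z.im = 0 ∧ 1 ≤ z.re)}

/-- The domain `D1 = ℂ ∖ {x ∈ ℝ : x ≤ 0}`. -/
def D1 : Set ℂ := {z | ¬ (z.im = 0 ∧ z.re ≤ 0)}

/-- The ℂ-linear extension of a word-indexed family of functions to `S`. -/
def extLin (h : Word → ℂ → ℂ) (x : S) (z : ℂ) : ℂ := x.sum fun w c => c * h w z

/-- A solution of the additive Riemann–Hilbert problem for multiple polylogarithms. -/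
def RHSol (h0 h1 : Word → ℂ → ℂ) : Prop :=
  -- (0) shuffle homomorphisms with prescribed value on `x0`
  (∀ z ∈ D0 ∩ D1,
      (h0 [] z = 1 ∧ h1 [] z = 1) ∧
      (∀ u v : Word,
          extLin h0 (sh (wordS u) (wordS v)) z = h0 u z * h0 v z ∧
          extLin h1 (sh (wordS u) (wordS v)) z = h1 u z * h1 v z) ∧
      h0 [false] z = Complex.log z ∧ h1 [false] z = Complex.log (1 - z)) ∧
  -- (1) holomorphy and the functional equation
  (∀ w : Word,
      DifferentiableOn ℂ (fun z => extLin h0 (reg0 (wordS w)) z) D0 ∧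
      DifferentiableOn ℂ (fun z => extLin h1 (reg0 (wordS w)) z) D1 ∧
      ∀ z ∈ D0 ∩ D1,
        ∑ k ∈ Finset.range (w.length + 1),
            h1 (tau (w.take k)) z * h0 (w.drop k) z = zetaS (reg10 (wordS w))) ∧
  -- (2) asymptotic condition at infinity
  (∀ w : Word,
      Filter.Tendsto (deriv fun z => extLin h0 (reg0 (wordS w)) z)
        (Bornology.cobounded ℂ ⊓ Filter.principal D0) (nhds 0) ∧
      Filter.Tendsto (deriv fun z => extLin h1 (reg0 (wordS w)) z)
        (Bornology.cobounded ℂ ⊓ Filter.principal D1) (nhds 0)) ∧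
  -- (3) normalization at the origin
  (∀ w : Word, extLin h0 (reg0 (wordS w)) 0 = 0)

/-!
Write `w = w₁ ⋯ wₙ`. The recursion of the shuffle product on first letters gives
`rev(w₁ ⋯ wₖ) ⧢ wₖ₊₁ ⋯ wₙ = Bₖ + Bₖ₊₁` with `Bₖ = wₖ · (rev(w₁ ⋯ wₖ₋₁) ⧢ wₖ₊₁ ⋯ wₙ)` for
`1 ≤ k ≤ n` (`shuffleSplit w k`) and `B₀ = Bₙ₊₁ = 0`. By multiplicativity the first sum is
`Σₖ (-1)ᵏ c(Bₖ + Bₖ₊₁)`, which telescopes to zero. Reversal of words is an automorphism of the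
shuffle product, so `c ∘ rev` is again multiplicative, and the second identity is the first one for
`c ∘ rev` and `rev w`, summed in the opposite order.
-/

theorem shWord_nil_left (v : Word) : shWord [] v = Finsupp.single v 1 := by
  rw [shWord]

theorem shWord_nil_right (u : Word) : shWord u [] = Finsupp.single u 1 := by
  cases u <;> rw [shWord]; simp

theorem shWord_cons_cons (a b : Bool) (u v : Word) :
    shWord (a :: u) (b :: v) =
      (shWord u (b :: v)).mapDomain (a :: ·) + (shWord (a :: u) v).mapDomain (b :: ·) := by
  rw [shWord]

theorem sh_wordS (u v : Word) : sh (wordS u) (wordS v) = shWord u v := by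
  simp [sh, wordS]

theorem mapDomain_cons_mapDomain_append (x a : Bool) (s : S) :
    (s.mapDomain (· ++ [a])).mapDomain (x :: ·) = (s.mapDomain (x :: ·)).mapDomain (· ++ [a]) := by
  rw [← Finsupp.mapDomain_comp, ← Finsupp.mapDomain_comp]
  rfl

theorem shWord_append_singleton : ∀ (u v : Word) (a b : Bool),
    shWord (u ++ [a]) (v ++ [b]) =
      (shWord u (v ++ [b])).mapDomain (· ++ [a]) + (shWord (u ++ [a]) v).mapDomain (· ++ [b])
  | [], [], a, b => by
      simp [shWord_cons_cons, shWord_nil_left, shWord_nil_right, add_comm]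
  | [], y :: v, a, b => by
      have ih := shWord_append_singleton [] v a b
      simp only [List.nil_append, List.cons_append] at ih ⊢
      rw [shWord_cons_cons, ih, shWord_cons_cons]
      simp only [shWord_nil_left, Finsupp.mapDomain_add, Finsupp.mapDomain_single,
        mapDomain_cons_mapDomain_append, List.cons_append]
      abel
  | x :: u, [], a, b => by
      have ih := shWord_append_singleton u [] a b
      simp only [List.nil_append, List.cons_append] at ih ⊢
      rw [shWord_cons_cons, ih, shWord_cons_cons]
      simp only [shWord_nil_right, Finsupp.mapDomain_add, Finsupp.mapDomain_single,
        mapDomain_cons_mapDomain_append, List.cons_append]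
      abel
  | x :: u, y :: v, a, b => by
      have ih₁ := shWord_append_singleton u (y :: v) a b
      have ih₂ := shWord_append_singleton (x :: u) v a b
      simp only [List.cons_append] at ih₁ ih₂ ⊢
      rw [shWord_cons_cons, ih₁, ih₂, shWord_cons_cons, shWord_cons_cons]
      simp only [Finsupp.mapDomain_add, mapDomain_cons_mapDomain_append]
      abel
  termination_by u v => u.length + v.length

theorem mapDomain_reverse_shWord : ∀ u v : Word,
    (shWord u v).mapDomain List.reverse = shWord u.reverse v.reverse
  | [], v => by simp [shWord_nil_left]
  | a :: u, [] => by simp [shWord_nil_right]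
  | a :: u, b :: v => by
      have hrev : ∀ x : Bool, (List.reverse ∘ (x :: ·) : Word → Word) = (· ++ [x]) ∘ List.reverse :=
        fun x => funext fun l => List.reverse_cons
      rw [shWord_cons_cons, Finsupp.mapDomain_add, ← Finsupp.mapDomain_comp,
        ← Finsupp.mapDomain_comp, hrev, hrev, Finsupp.mapDomain_comp, Finsupp.mapDomain_comp,
        mapDomain_reverse_shWord u (b :: v), mapDomain_reverse_shWord (a :: u) v,
        List.reverse_cons, List.reverse_cons, shWord_append_singleton]
  termination_by u v => u.length + v.length

def shuffleSplit (w : Word) : ℕ → S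
  | 0 => 0
  | k + 1 =>
    if h : k < w.length then (shWord (w.take k).reverse (w.drop (k + 1))).mapDomain (w[k] :: ·)
    else 0

theorem shWord_reverse_take_drop {w : Word} (hw : w ≠ []) {k : ℕ} (hk : k ≤ w.length) :
    shWord (w.take k).reverse (w.drop k) = shuffleSplit w k + shuffleSplit w (k + 1) := by
  rcases k with _ | k
  · obtain ⟨a, t, rfl⟩ := List.exists_cons_of_ne_nil hw
    simp [shuffleSplit, shWord_nil_left]
  have htake : (w.take (k + 1)).reverse = w[k] :: (w.take k).reverse := by
    rw [List.take_succ_eq_append_getElem hk, List.reverse_append]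
    rfl
  rcases hk.lt_or_eq with hlt | heq
  · have hdrop := List.drop_eq_getElem_cons hlt
    rw [htake, hdrop, shWord_cons_cons, ← htake, ← hdrop]
    simp only [shuffleSplit, dif_pos (Nat.lt_of_succ_lt hlt), dif_pos hlt]
  · have hdrop : w.drop (k + 1) = [] := List.drop_eq_nil_of_le heq.ge
    simp only [shuffleSplit, htake, hdrop, shWord_nil_right, dif_pos (Nat.lt_of_succ_le hk),
      dif_neg (by omega : ¬ k + 1 < w.length), Finsupp.mapDomain_single, add_zero]

def IsShuffleMultiplicative (c : S →ₗ[ℂ] ℂ) : Prop :=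
  ∀ u v : Word, c (sh (wordS u) (wordS v)) = c (wordS u) * c (wordS v)

namespace IsShuffleMultiplicative

variable {c : S →ₗ[ℂ] ℂ}

theorem comp_reverse (hc : IsShuffleMultiplicative c) :
    IsShuffleMultiplicative (c.comp (Finsupp.lmapDomain ℂ ℂ List.reverse)) := by
  have hrev : ∀ u : Word, (wordS u).mapDomain List.reverse = wordS u.reverse := by
    simp [wordS]
  intro u v
  change c ((sh (wordS u) (wordS v)).mapDomain List.reverse) =
    c ((wordS u).mapDomain List.reverse) * c ((wordS v).mapDomain List.reverse)
  rw [hrev, hrev, sh_wordS, mapDomain_reverse_shWord, ← sh_wordS, hc]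

theorem sum_reverse_take_mul_drop_eq_zero (hc : IsShuffleMultiplicative c) {w : Word}
    (hw : w ≠ []) :
    ∑ k ∈ Finset.range (w.length + 1),
      (-1 : ℂ) ^ k * c (wordS (w.take k).reverse) * c (wordS (w.drop k)) = 0 := by
  let f : ℕ → ℂ := fun k => (-1) ^ k * c (shuffleSplit w k)
  have hterm : ∀ k ∈ Finset.range (w.length + 1),
      (-1 : ℂ) ^ k * c (wordS (w.take k).reverse) * c (wordS (w.drop k)) = f k - f (k + 1) := by
    intro k hk
    rw [mul_assoc, ← hc, sh_wordS,
      shWord_reverse_take_drop hw (Finset.mem_range_succ_iff.mp hk), map_add]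
    simp only [f, pow_succ]
    ring
  rw [Finset.sum_congr rfl hterm, Finset.sum_range_sub']
  simp [f, shuffleSplit]

end IsShuffleMultiplicative

theorem grouplike_inverse_general (c : S →ₗ[ℂ] ℂ)
    (hmul : ∀ u v : Word, c (sh (wordS u) (wordS v)) = c (wordS u) * c (wordS v))
    (w : Word) (hw : w ≠ []) :
    (∑ k ∈ Finset.range (w.length + 1),
        (-1 : ℂ) ^ k * c (wordS (w.take k).reverse) * c (wordS (w.drop k))) = 0 ∧
    (∑ k ∈ Finset.range (w.length + 1),
        (-1 : ℂ) ^ (w.length - k) * c (wordS (w.take k)) * c (wordS (w.drop k).reverse)) = 0 := by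
  have hc : IsShuffleMultiplicative c := hmul
  refine ⟨hc.sum_reverse_take_mul_drop_eq_zero hw, ?_⟩
  have hrev := hc.comp_reverse.sum_reverse_take_mul_drop_eq_zero (List.reverse_ne_nil_iff.mpr hw)
  rw [List.length_reverse] at hrev
  rw [← Finset.sum_range_reflect, ← hrev]
  refine Finset.sum_congr rfl fun k hk => ?_
  have hkw : k ≤ w.length := Finset.mem_range_succ_iff.mp hk
  simp only [LinearMap.comp_apply, Finsupp.lmapDomain_apply, wordS, Finsupp.mapDomain_single,
    List.take_reverse, List.drop_reverse, List.reverse_reverse,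
    Nat.add_sub_cancel, Nat.sub_sub_self hkw]
  ring

/-- Inverse of a grouplike power series, in coefficient form: if
`c : S → ℂ` is linear with `c(e) = 1` and `c(u ⧢ v) = c(u) c(v)` for all words, then for every
nonempty word `w`, `Σ_{uv=w} (-1)^{|u|} c(rev u) c(v) = 0` and
`Σ_{uv=w} (-1)^{|v|} c(u) c(rev v) = 0`. -/
theorem grouplike_inverse (c : S →ₗ[ℂ] ℂ) (hone : c (wordS []) = 1)
    (hmul : ∀ u v : Word, c (sh (wordS u) (wordS v)) = c (wordS u) * c (wordS v))
    (w : Word) (hw : w ≠ []) :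
    (∑ k ∈ Finset.range (w.length + 1),
        (-1 : ℂ) ^ k * c (wordS (w.take k).reverse) * c (wordS (w.drop k))) = 0 ∧
    (∑ k ∈ Finset.range (w.length + 1),
        (-1 : ℂ) ^ (w.length - k) * c (wordS (w.take k)) * c (wordS (w.drop k).reverse)) = 0 :=
  grouplike_inverse_general c hmul w hw

end

end MZVRH
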